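/- Let p, q, r ∈ ℝ³ and w ∈ ℝ³ be such that q−p, r−p, w are linearly independent, and let P = conv{p, q, r, p+w, q+w, r+w} be the associated triangular prism. Then the three tetrahedra conv{q+w, q, r, p}, conv{p, r, p+w, q+w}, conv{p+w, r, r+w, q+w} have pairwise disjoint interiors, their union equals P, and each of the three has volume |det(q−p, r−p, w)|/6, i.e. one third of the volume of P. -/

import Mathlib

/-!
The affine map `x ↦ p + x₀ (q - p) + x₁ (r - p) + x₂ w` carries the unit prism
`{x | 0 ≤ x₀, 0 ≤ x₁, x₀ + x₁ ≤ 1, 0 ≤ x₂ ≤ 1}` onto `P` and its three tetrahedra onto the `T i`,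
and it multiplies volumes by `|det(q - p, r - p, w)|`. In the unit prism the tetrahedra are cut
out by the planes `x₀ = x₂` and `x₁ + x₂ = 1`: they cover it and meet in null sets, so their
interiors are disjoint. They are images of one another under affine maps of determinant `-1`, and
the unit prism is half of the unit cube, so each of them has volume `1/6`.
-/

open MeasureTheory Set

theorem MeasureTheory.AEDisjoint.disjoint_interior {X : Type*} [TopologicalSpace X]
    [MeasurableSpace X] {μ : Measure X} [μ.IsOpenPosMeasure] {s t : Set X}
    (h : AEDisjoint μ s t) : Disjoint (interior s) (interior t) :=
  disjoint_iff_inter_eq_empty.2 <|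
    ((isOpen_interior.inter isOpen_interior).measure_eq_zero_iff μ).1 <|
      measure_mono_null (inter_subset_inter interior_subset interior_subset) h

namespace MeasureTheory

variable {E : Type*} [NormedAddCommGroup E] [NormedSpace ℝ E] [MeasurableSpace E] [BorelSpace E]
  [FiniteDimensional ℝ E] (μ : Measure E) [μ.IsAddHaarMeasure]

theorem Measure.addHaar_image_affineMap (f : E →ᵃ[ℝ] E) (s : Set E) :
    μ (f '' s) = ENNReal.ofReal |LinearMap.det f.linear| * μ s := by
  have : f '' s = (· + f 0) '' (f.linear '' s) := by
    rw [image_image]; exact image_congr fun x _ => congrFun f.decomp x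
  rw [this, image_add_right, measure_preimage_add_right, Measure.addHaar_image_linearMap]

theorem Measure.addHaar_setOf_linearMap_eq {f : E →ₗ[ℝ] ℝ} (hf : f ≠ 0) (c : ℝ) :
    μ {x | f x = c} = 0 := by
  obtain ⟨v, hv⟩ : ∃ v, f v = c := (f.surjective_or_eq_zero.resolve_right hf) c
  have : {x | f x = c} = (· + -v) ⁻¹' LinearMap.ker f := by
    ext x; simp [hv, ← sub_eq_add_neg, sub_eq_zero]
  rw [this, measure_preimage_add_right]
  exact Measure.addHaar_submodule μ _ (by simpa [LinearMap.ker_eq_top] using hf)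

variable {μ} in
/-- A singular affine map collapses everything to a null set; a regular one is injective. -/
theorem AEDisjoint.image_affineMap {s t : Set E} (h : AEDisjoint μ s t) (f : E →ᵃ[ℝ] E) :
    AEDisjoint μ (f '' s) (f '' t) := by
  by_cases hdet : LinearMap.det f.linear = 0
  · refine measure_mono_null inter_subset_left ?_
    rw [Measure.addHaar_image_affineMap, hdet, abs_zero, ENNReal.ofReal_zero, zero_mul]
  · have hf : Function.Injective f := (AffineMap.linear_injective_iff f).1 <|
      ((Module.End.isUnit_iff _).1 ((LinearMap.isUnit_iff_isUnit_det _).2 (Ne.isUnit hdet))).1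
    rw [AEDisjoint, ← image_inter hf, Measure.addHaar_image_affineMap, h, mul_zero]

end MeasureTheory

section Coordinates

variable {ι : Type*} [Fintype ι]

theorem volume_setOf_add_eq (i j : ι) (c : ℝ) : volume {x : ι → ℝ | x i + x j = c} = 0 := by
  classical
  refine Measure.addHaar_setOf_linearMap_eq volume
    (f := LinearMap.proj (R := ℝ) (φ := fun _ : ι => ℝ) i + LinearMap.proj j) (fun h => ?_) c
  have := LinearMap.congr_fun h (Pi.single i (1 : ℝ))
  by_cases hji : j = i <;> simp [hji] at this

theorem volume_setOf_eq {i j : ι} (hij : i ≠ j) : volume {x : ι → ℝ | x i = x j} = 0 := by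
  classical
  convert Measure.addHaar_setOf_linearMap_eq volume
    (f := LinearMap.proj (R := ℝ) (φ := fun _ : ι => ℝ) i - LinearMap.proj j)
    (fun h => by simpa [hij.symm] using LinearMap.congr_fun h (Pi.single i (1 : ℝ))) 0 using 3
  simp [sub_eq_zero]

end Coordinates

section Prism

variable {E F : Type*} [AddCommGroup E] [Module ℝ E] [AddCommGroup F] [Module ℝ F]

theorem mem_convexHull_four {a b c d : E} {s t u v : ℝ} (hs : 0 ≤ s) (ht : 0 ≤ t) (hu : 0 ≤ u)
    (hv : 0 ≤ v) (h : s + t + u + v = 1) {x : E} (hx : s • a + t • b + u • c + v • d = x) :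
    x ∈ convexHull ℝ {a, b, c, d} := by
  refine mem_convexHull_of_exists_fintype ![s, t, u, v] ![a, b, c, d] ?_ ?_ ?_ ?_
  · intro i; fin_cases i <;> simpa
  · simp [Fin.sum_univ_four, h]
  · intro i; fin_cases i <;> simp
  · simp [Fin.sum_univ_four, ← hx, add_assoc]

theorem AffineMap.map_add_eq_add_linear (f : E →ᵃ[ℝ] F) (p w : E) :
    f (p + w) = f p + f.linear w := by
  rw [add_comm p, ← vadd_eq_add, f.map_vadd, vadd_eq_add, add_comm]

def prism (p q r w : E) : Set E := convexHull ℝ {p, q, r, p + w, q + w, r + w}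

def prismTetrahedra (p q r w : E) : Fin 3 → Set E :=
  ![convexHull ℝ {q + w, q, r, p}, convexHull ℝ {p, r, p + w, q + w},
    convexHull ℝ {p + w, r, r + w, q + w}]

theorem convex_prism (p q r w : E) : Convex ℝ (prism p q r w) :=
  convex_convexHull ℝ _

theorem convex_prismTetrahedra (p q r w : E) (i : Fin 3) :
    Convex ℝ (prismTetrahedra p q r w i) := by
  fin_cases i <;> exact convex_convexHull ℝ _

theorem prismTetrahedra_subset_prism (p q r w : E) (i : Fin 3) :
    prismTetrahedra p q r w i ⊆ prism p q r w := by
  fin_cases i <;> exact convexHull_mono (by simp [insert_subset_iff])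

theorem image_prism (f : E →ᵃ[ℝ] F) (p q r w : E) :
    f '' prism p q r w = prism (f p) (f q) (f r) (f.linear w) := by
  simp [prism, f.image_convexHull, image_insert_eq, f.map_add_eq_add_linear]

theorem image_prismTetrahedra (f : E →ᵃ[ℝ] F) (p q r w : E) (i : Fin 3) :
    f '' prismTetrahedra p q r w i = prismTetrahedra (f p) (f q) (f r) (f.linear w) i := by
  fin_cases i <;>
    simp [prismTetrahedra, f.image_convexHull, image_insert_eq, f.map_add_eq_add_linear]

def frameMap {ι : Type*} [Fintype ι] (o : E) (v : ι → E) : (ι → ℝ) →ᵃ[ℝ] E :=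
  (Fintype.linearCombination ℝ v).toAffineMap + AffineMap.const ℝ _ o

theorem frameMap_apply {ι : Type*} [Fintype ι] (o : E) (v : ι → E) (x : ι → ℝ) :
    frameMap o v x = ∑ i, x i • v i + o := by
  simp [frameMap, Fintype.linearCombination_apply]

theorem frameMap_linear {ι : Type*} [Fintype ι] (o : E) (v : ι → E) :
    (frameMap o v).linear = Fintype.linearCombination ℝ v := by
  simp [frameMap]

end Prism

theorem det_frameMap_linear {ι : Type*} [Fintype ι] [DecidableEq ι] (o : ι → ℝ)
    (v : ι → ι → ℝ) : LinearMap.det (frameMap o v).linear = (Matrix.of v).det := by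
  have : Fintype.linearCombination ℝ v = Matrix.toLin' (Matrix.of v).transpose := by
    ext x i
    simp [Fintype.linearCombination_apply, Matrix.mulVec, dotProduct, mul_comm]
  rw [frameMap_linear, this, LinearMap.det_toLin', Matrix.det_transpose]

def unitPrism : Set (Fin 3 → ℝ) := prism 0 ![1, 0, 0] ![0, 1, 0] ![0, 0, 1]

def unitPrismTetrahedra : Fin 3 → Set (Fin 3 → ℝ) :=
  prismTetrahedra 0 ![1, 0, 0] ![0, 1, 0] ![0, 0, 1]

theorem unitPrism_subset_setOf :
    unitPrism ⊆ {x | 0 ≤ x 0 ∧ 0 ≤ x 1 ∧ x 0 + x 1 ≤ 1 ∧ 0 ≤ x 2 ∧ x 2 ≤ 1} := by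
  refine convexHull_min (by simp [insert_subset_iff]) ?_
  rintro x ⟨hx₀, hx₁, hx₀₁, hx₂, hx₂'⟩ y ⟨hy₀, hy₁, hy₀₁, hy₂, hy₂'⟩ a b ha hb hab
  simp only [mem_ofPred_eq, Pi.add_apply, Pi.smul_apply, smul_eq_mul]
  refine ⟨?_, ?_, ?_, ?_, ?_⟩ <;> nlinarith

theorem setOf_subset_unitPrismTetrahedra_union :
    {x | 0 ≤ x 0 ∧ 0 ≤ x 1 ∧ x 0 + x 1 ≤ 1 ∧ 0 ≤ x 2 ∧ x 2 ≤ 1} ⊆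
      unitPrismTetrahedra 0 ∪ unitPrismTetrahedra 1 ∪ unitPrismTetrahedra 2 := by
  rintro x ⟨h₀, h₁, h₀₁, h₂, h₂'⟩
  simp only [unitPrismTetrahedra, prismTetrahedra, mem_union, Matrix.cons_val_zero,
    Matrix.cons_val_one, Matrix.cons_val_two, Matrix.head_cons, Matrix.tail_cons]
  by_cases h₂₀ : x 2 ≤ x 0
  · refine .inl (.inl (mem_convexHull_four h₂ (sub_nonneg.2 h₂₀) h₁
      (by linarith : 0 ≤ 1 - x 0 - x 1) (by ring) ?_))
    ext j; fin_cases j <;> simp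
  by_cases h₁₂ : x 1 + x 2 ≤ 1
  · refine .inl (.inr (mem_convexHull_four (by linarith : 0 ≤ 1 - x 1 - x 2) h₁
      (by linarith : 0 ≤ x 2 - x 0) h₀ (by ring) ?_))
    ext j; fin_cases j <;> simp
  · refine .inr (mem_convexHull_four (by linarith : 0 ≤ 1 - x 0 - x 1)
      (by linarith : 0 ≤ 1 - x 2) (by linarith : 0 ≤ x 1 + x 2 - 1) h₀ (by ring) ?_)
    ext j; fin_cases j <;> simp; ring

theorem unitPrismTetrahedra_union :
    unitPrismTetrahedra 0 ∪ unitPrismTetrahedra 1 ∪ unitPrismTetrahedra 2 = unitPrism :=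
  subset_antisymm
    (union_subset (union_subset (prismTetrahedra_subset_prism ..)
      (prismTetrahedra_subset_prism ..)) (prismTetrahedra_subset_prism ..))
    (unitPrism_subset_setOf.trans setOf_subset_unitPrismTetrahedra_union)

theorem unitPrism_eq_setOf :
    unitPrism = {x | 0 ≤ x 0 ∧ 0 ≤ x 1 ∧ x 0 + x 1 ≤ 1 ∧ 0 ≤ x 2 ∧ x 2 ≤ 1} :=
  subset_antisymm unitPrism_subset_setOf
    (unitPrismTetrahedra_union ▸ setOf_subset_unitPrismTetrahedra_union)

theorem unitPrismTetrahedra_zero_subset :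
    unitPrismTetrahedra 0 ⊆ {x | x 2 ≤ x 0 ∧ x 1 + x 2 ≤ 1} := by
  refine convexHull_min (by simp [insert_subset_iff]) ?_
  rintro x ⟨hx, hx'⟩ y ⟨hy, hy'⟩ a b ha hb hab
  simp only [mem_ofPred_eq, Pi.add_apply, Pi.smul_apply, smul_eq_mul]
  constructor <;> nlinarith

theorem unitPrismTetrahedra_one_subset :
    unitPrismTetrahedra 1 ⊆ {x | x 0 ≤ x 2 ∧ x 1 + x 2 ≤ 1} := by
  refine convexHull_min (by simp [insert_subset_iff]) ?_
  rintro x ⟨hx, hx'⟩ y ⟨hy, hy'⟩ a b ha hb hab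
  simp only [mem_ofPred_eq, Pi.add_apply, Pi.smul_apply, smul_eq_mul]
  constructor <;> nlinarith

theorem unitPrismTetrahedra_two_subset :
    unitPrismTetrahedra 2 ⊆ {x | 1 ≤ x 1 + x 2} := by
  refine convexHull_min (by simp [insert_subset_iff]) ?_
  rintro x hx y hy a b ha hb hab
  simp only [mem_ofPred_eq, Pi.add_apply, Pi.smul_apply, smul_eq_mul] at *
  nlinarith

theorem aedisjoint_unitPrismTetrahedra {i j : Fin 3} (hij : i ≠ j) :
    AEDisjoint volume (unitPrismTetrahedra i) (unitPrismTetrahedra j) := by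
  have h₀₁ : AEDisjoint volume (unitPrismTetrahedra 0) (unitPrismTetrahedra 1) :=
    measure_mono_null (fun x ⟨hx₀, hx₁⟩ => le_antisymm (unitPrismTetrahedra_one_subset hx₁).1
      (unitPrismTetrahedra_zero_subset hx₀).1) (volume_setOf_eq (by decide : (0 : Fin 3) ≠ 2))
  have h₀₂ : AEDisjoint volume (unitPrismTetrahedra 0) (unitPrismTetrahedra 2) :=
    measure_mono_null (fun x ⟨hx₀, hx₂⟩ => le_antisymm (unitPrismTetrahedra_zero_subset hx₀).2
      (unitPrismTetrahedra_two_subset hx₂)) (volume_setOf_add_eq 1 2 1)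
  have h₁₂ : AEDisjoint volume (unitPrismTetrahedra 1) (unitPrismTetrahedra 2) :=
    measure_mono_null (fun x ⟨hx₁, hx₂⟩ => le_antisymm (unitPrismTetrahedra_one_subset hx₁).2
      (unitPrismTetrahedra_two_subset hx₂)) (volume_setOf_add_eq 1 2 1)
  fin_cases i <;> fin_cases j <;>
    first | exact absurd rfl hij | assumption | exact AEDisjoint.symm ‹_›

section Transfer

variable {E : Type*} [AddCommGroup E] [Module ℝ E]

theorem image_frameMap_unitPrism (p q r w : E) :
    frameMap p ![q - p, r - p, w] '' unitPrism = prism p q r w := by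
  rw [unitPrism, image_prism, frameMap_linear]
  simp [frameMap_apply, Fin.sum_univ_three, Fintype.linearCombination_apply]

theorem image_frameMap_unitPrismTetrahedra (p q r w : E) (i : Fin 3) :
    frameMap p ![q - p, r - p, w] '' unitPrismTetrahedra i = prismTetrahedra p q r w i := by
  rw [unitPrismTetrahedra, image_prismTetrahedra, frameMap_linear]
  simp [frameMap_apply, Fin.sum_univ_three, Fintype.linearCombination_apply]

theorem prismTetrahedra_union (p q r w : E) :
    prismTetrahedra p q r w 0 ∪ prismTetrahedra p q r w 1 ∪ prismTetrahedra p q r w 2 =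
      prism p q r w := by
  simp only [← image_frameMap_unitPrismTetrahedra, ← image_frameMap_unitPrism, ← image_union,
    unitPrismTetrahedra_union]

end Transfer

theorem aedisjoint_prismTetrahedra (p q r w : Fin 3 → ℝ) {i j : Fin 3} (hij : i ≠ j) :
    AEDisjoint volume (prismTetrahedra p q r w i) (prismTetrahedra p q r w j) := by
  simpa only [image_frameMap_unitPrismTetrahedra] using
    (aedisjoint_unitPrismTetrahedra hij).image_affineMap (frameMap p ![q - p, r - p, w])

theorem volume_prism_eq_mul (p q r w : Fin 3 → ℝ) :
    volume (prism p q r w) =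
      ENNReal.ofReal |(Matrix.of ![q - p, r - p, w]).det| * volume unitPrism := by
  rw [← image_frameMap_unitPrism, Measure.addHaar_image_affineMap, det_frameMap_linear]

theorem volume_prismTetrahedra_eq_mul (p q r w : Fin 3 → ℝ) (i : Fin 3) :
    volume (prismTetrahedra p q r w i) =
      ENNReal.ofReal |(Matrix.of ![q - p, r - p, w]).det| * volume (unitPrismTetrahedra i) := by
  rw [← image_frameMap_unitPrismTetrahedra, Measure.addHaar_image_affineMap, det_frameMap_linear]

def unitCubeHalfTurn : (Fin 3 → ℝ) →ᵃ[ℝ] (Fin 3 → ℝ) :=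
  frameMap ![1, 1, 0] ![![-1, 0, 0], ![0, -1, 0], ![0, 0, 1]]

theorem unitCubeHalfTurn_apply (x : Fin 3 → ℝ) :
    unitCubeHalfTurn x = ![1 - x 0, 1 - x 1, x 2] := by
  ext j; fin_cases j <;> simp [unitCubeHalfTurn, frameMap_apply, Fin.sum_univ_three] <;> ring

theorem unitPrism_union_image_unitCubeHalfTurn :
    unitPrism ∪ unitCubeHalfTurn '' unitPrism = univ.pi fun _ => Icc 0 1 := by
  rw [unitPrism_eq_setOf]
  ext x
  simp only [mem_union, mem_image, mem_pi, mem_univ, forall_const, mem_Icc, mem_ofPred_eq]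
  constructor
  · rintro (⟨h₀, h₁, h₀₁, h₂, h₂'⟩ | ⟨y, ⟨h₀, h₁, h₀₁, h₂, h₂'⟩, rfl⟩) i <;>
      fin_cases i <;> simp [unitCubeHalfTurn_apply] <;> constructor <;> linarith
  · intro h
    by_cases hx : x 0 + x 1 ≤ 1
    · exact .inl ⟨(h 0).1, (h 1).1, hx, (h 2).1, (h 2).2⟩
    · refine .inr ⟨unitCubeHalfTurn x, ?_, ?_⟩
      · simp only [unitCubeHalfTurn_apply, Matrix.cons_val_zero, Matrix.cons_val_one,
          Matrix.cons_val_two, Matrix.head_cons, Matrix.tail_cons]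
        exact ⟨by linarith [(h 0).2], by linarith [(h 1).2], by linarith, (h 2).1, (h 2).2⟩
      · ext j; fin_cases j <;> simp [unitCubeHalfTurn_apply]

theorem aedisjoint_unitPrism_image_unitCubeHalfTurn :
    AEDisjoint volume unitPrism (unitCubeHalfTurn '' unitPrism) := by
  refine measure_mono_null ?_ (volume_setOf_add_eq 0 1 1)
  rw [unitPrism_eq_setOf]
  rintro x ⟨⟨-, -, hx, -, -⟩, ⟨y, ⟨-, -, hy, -, -⟩, rfl⟩⟩
  simp only [mem_ofPred_eq, unitCubeHalfTurn_apply, Matrix.cons_val_zero,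
    Matrix.cons_val_one] at hx ⊢
  linarith

theorem volume_unitPrism : volume unitPrism = 2⁻¹ := by
  have hvol : volume (unitCubeHalfTurn '' unitPrism) = volume unitPrism := by
    rw [Measure.addHaar_image_affineMap, unitCubeHalfTurn, det_frameMap_linear]
    simp [Matrix.det_fin_three]
  have hmeas : NullMeasurableSet (unitCubeHalfTurn '' unitPrism) volume :=
    ((convex_prism ..).affine_image _).nullMeasurableSet (μ := volume)
  have h2 : 2 * volume unitPrism = 1 := by
    rw [two_mul]
    nth_rw 2 [← hvol]
    rw [← measure_union₀ hmeas aedisjoint_unitPrism_image_unitCubeHalfTurn,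
      unitPrism_union_image_unitCubeHalfTurn, volume_pi_pi]
    simp
  exact ENNReal.eq_inv_of_mul_eq_one_left (by rwa [mul_comm])

/-- Each of the other two tetrahedra is the first tetrahedron of a prism whose frame has
determinant `-1`. -/
theorem volume_unitPrismTetrahedra (i : Fin 3) : volume (unitPrismTetrahedra i) = 6⁻¹ := by
  have h₁ : volume (unitPrismTetrahedra 1) = volume (unitPrismTetrahedra 0) := by
    have : unitPrismTetrahedra 1 = prismTetrahedra (![1, 0, 0] + ![0, 0, 1]) ![0, 1, 0]
        (0 + ![0, 0, 1]) (-![0, 1, 0]) 0 := by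
      simp only [unitPrismTetrahedra, prismTetrahedra, Matrix.cons_val_zero,
        Matrix.cons_val_one, add_neg_cancel]
    rw [this, volume_prismTetrahedra_eq_mul]
    simp [Matrix.det_fin_three]
  have h₂ : volume (unitPrismTetrahedra 2) = volume (unitPrismTetrahedra 0) := by
    have : unitPrismTetrahedra 2 = prismTetrahedra (![1, 0, 0] + ![0, 0, 1]) ![0, 1, 0]
        (![0, 1, 0] + ![0, 0, 1]) (![0, 0, 1] - ![0, 1, 0]) 0 := by
      simp only [unitPrismTetrahedra, prismTetrahedra, Matrix.cons_val_zero,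
        Matrix.cons_val_two, Matrix.tail_cons, Matrix.head_cons, add_sub_cancel, zero_add]
    rw [this, volume_prismTetrahedra_eq_mul]
    simp [Matrix.det_fin_three]
  have hsum : 3 * volume (unitPrismTetrahedra 0) = 2⁻¹ := by
    have hmeas (i : Fin 3) : NullMeasurableSet (unitPrismTetrahedra i) volume :=
      (convex_prismTetrahedra ..).nullMeasurableSet (μ := volume)
    rw [← volume_unitPrism, ← unitPrismTetrahedra_union,
      measure_union₀ (hmeas 2) ((aedisjoint_unitPrismTetrahedra (by decide)).union_left
        (aedisjoint_unitPrismTetrahedra (by decide))),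
      measure_union₀ (hmeas 1) (aedisjoint_unitPrismTetrahedra (by decide)), h₁, h₂]
    ring
  have h₀ : volume (unitPrismTetrahedra 0) = 6⁻¹ := by
    rw [← ENNReal.mul_right_inj (by norm_num : (3 : ENNReal) ≠ 0) (by norm_num), hsum,
      show (6 : ENNReal) = 3 * 2 by norm_num, ENNReal.mul_inv (by simp) (by simp), ← mul_assoc,
      ENNReal.mul_inv_cancel (by simp) (by simp), one_mul]
  fin_cases i
  exacts [h₀, h₁.trans h₀, h₂.trans h₀]

theorem volume_prism (p q r w : Fin 3 → ℝ) :
    volume (prism p q r w) = ENNReal.ofReal (|(Matrix.of ![q - p, r - p, w]).det| / 2) := by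
  rw [volume_prism_eq_mul, volume_unitPrism, div_eq_mul_inv, ENNReal.ofReal_mul (abs_nonneg _),
    ENNReal.ofReal_inv_of_pos two_pos, ENNReal.ofReal_ofNat]

theorem volume_prismTetrahedra (p q r w : Fin 3 → ℝ) (i : Fin 3) :
    volume (prismTetrahedra p q r w i) =
      ENNReal.ofReal (|(Matrix.of ![q - p, r - p, w]).det| / 6) := by
  rw [volume_prismTetrahedra_eq_mul, volume_unitPrismTetrahedra, div_eq_mul_inv,
    ENNReal.ofReal_mul (abs_nonneg _), ENNReal.ofReal_inv_of_pos (by norm_num),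
    ENNReal.ofReal_ofNat]

theorem prism_three_tetrahedra_subdivision_general
    (p q r w : Fin 3 → ℝ)
    (P : Set (Fin 3 → ℝ))
    (hP : P = convexHull ℝ {p, q, r, p + w, q + w, r + w})
    (T : Fin 3 → Set (Fin 3 → ℝ))
    (hT : T = ![convexHull ℝ {q + w, q, r, p},
                convexHull ℝ {p, r, p + w, q + w},
                convexHull ℝ {p + w, r, r + w, q + w}]) :
    (∀ i j : Fin 3, i ≠ j → interior (T i) ∩ interior (T j) = ∅) ∧
    T 0 ∪ T 1 ∪ T 2 = P ∧
    (∀ i : Fin 3,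
      volume (T i) =
        ENNReal.ofReal (|Matrix.det (Matrix.of ![q - p, r - p, w])| / 6) ∧
      volume (T i) = volume P / 3) := by
  obtain rfl : P = prism p q r w := hP
  obtain rfl : T = prismTetrahedra p q r w := hT
  refine ⟨fun i j hij => (aedisjoint_prismTetrahedra p q r w hij).disjoint_interior.inter_eq,
    prismTetrahedra_union p q r w, fun i => ⟨volume_prismTetrahedra p q r w i, ?_⟩⟩
  rw [volume_prismTetrahedra, volume_prism, ← ENNReal.ofReal_ofNat 3,
    ← ENNReal.ofReal_div_of_pos three_pos]
  ring_nf

/-- The 'vertex-to-edge' subdivision of a triangular prism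
`P = conv{p, q, r, p+w, q+w, r+w}` into three tetrahedra: the three
tetrahedra have pairwise disjoint interiors, their union is `P`, and each has
volume `|det(q−p, r−p, w)|/6`, one third of the volume of `P`. -/
theorem prism_three_tetrahedra_subdivision
    (p q r w : Fin 3 → ℝ)
    (hind : LinearIndependent ℝ ![q - p, r - p, w])
    (P : Set (Fin 3 → ℝ))
    (hP : P = convexHull ℝ {p, q, r, p + w, q + w, r + w})
    (T : Fin 3 → Set (Fin 3 → ℝ))
    (hT : T = ![convexHull ℝ {q + w, q, r, p},
                convexHull ℝ {p, r, p + w, q + w},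
                convexHull ℝ {p + w, r, r + w, q + w}]) :
    (∀ i j : Fin 3, i ≠ j → interior (T i) ∩ interior (T j) = ∅) ∧
    T 0 ∪ T 1 ∪ T 2 = P ∧
    (∀ i : Fin 3,
      volume (T i) =
        ENNReal.ofReal (|Matrix.det (Matrix.of ![q - p, r - p, w])| / 6) ∧
      volume (T i) = volume P / 3) :=
  prism_three_tetrahedra_subdivision_general p q r w P hP T hT
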